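/- arXiv:2603.06488 — 3 statements merged into one kernel-verified Lean document; each statement's English description precedes it below -/
import Mathlib

section
/- Let ν, r, γ be real numbers with γ > 0, ν ≥ 1, r ≥ 0. Let σ := !![0, 1; -1, 0] (the 2×2 symplectic form), Γ := diag(ν·exp(2r), ν·exp(−2r)), K := −γ·I + 2γ·Γ⁻¹, and M^Bayes := 2γ·I + i·(K·σ + σ·Kᵀ), regarded as a 2×2 complex matrix. Then M^Bayes is positive semidefinite if and only if cosh(2r) ≤ ν. Equivalently, the fixed-diffusion Bayes reverse generator violates complete positivity exactly when cosh(2r) > ν. -/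
open Matrix Complex
open scoped ComplexOrder

/-- The one-mode symplectic form in HHW conventions, as a complex matrix. -/
noncomputable def symp : Matrix (Fin 2) (Fin 2) ℂ := !![0, 1; -1, 0]

/-- Squeezed-thermal reference covariance `diag(ν e^{2r}, ν e^{-2r})`, as a complex matrix. -/
noncomputable def Gam (ν r : ℝ) : Matrix (Fin 2) (Fin 2) ℂ :=
  Matrix.diagonal ![((ν * Real.exp (2 * r) : ℝ) : ℂ), ((ν * Real.exp (-(2 * r)) : ℝ) : ℂ)]

/-- Bayes reverse drift `K = -γ I + 2γ Γ⁻¹`. -/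
noncomputable def Kbayes (ν r γ : ℝ) : Matrix (Fin 2) (Fin 2) ℂ :=
  (-(γ : ℂ)) • (1 : Matrix (Fin 2) (Fin 2) ℂ) + ((2 * γ : ℝ) : ℂ) • (Gam ν r)⁻¹

/-- Generator CP matrix of the Bayes reverse candidate:
`M = 2γ I + i (K σ + σ Kᵀ)`. -/
noncomputable def MBayes (ν r γ : ℝ) : Matrix (Fin 2) (Fin 2) ℂ :=
  ((2 * γ : ℝ) : ℂ) • (1 : Matrix (Fin 2) (Fin 2) ℂ) +
    Complex.I • (Kbayes ν r γ * symp + symp * (Kbayes ν r γ)ᵀ)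

/-! Since `Γ` is diagonal, so is `K = diag(k₁, k₂)`, and for diagonal `K` one has
`K σ + σ Kᵀ = (k₁ + k₂) σ`. Hence `M = 2γ I + i t σ` with `t = k₁ + k₂ = 2γ (2 cosh(2r)/ν - 1)`.
The Hermitian matrix `d I + i t σ` has eigenvalues `d ± t` with eigenvectors `(1, ∓i)`, so it is
positive semidefinite iff `|t| ≤ d`; for `d = 2γ > 0` this reads `|2 cosh(2r)/ν - 1| ≤ 1`. -/

theorem Matrix.inv_diagonal_of_ne_zero {n K : Type*} [Fintype n] [DecidableEq n] [Field K]
    {v : n → K} (hv : ∀ i, v i ≠ 0) : (diagonal v)⁻¹ = diagonal v⁻¹ :=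
  inv_eq_left_inv <| by
    rw [diagonal_mul_diagonal, ← diagonal_one]
    exact congrArg diagonal (funext fun i => inv_mul_cancel₀ (hv i))

lemma diagonal_mul_symp_add_symp_mul_transpose (k : Fin 2 → ℂ) :
    diagonal k * symp + symp * (diagonal k)ᵀ = (k 0 + k 1) • symp := by
  ext i j
  simp only [Matrix.add_apply, diagonal_transpose, mul_diagonal, diagonal_mul, Matrix.smul_apply,
    smul_eq_mul]
  fin_cases i <;> fin_cases j <;> simp [symp]

lemma star_dotProduct_smul_one_add_smul_symp_mulVec (d s ε : ℝ) (hε : ε ^ 2 = 1) :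
    star ![1, ε * I] ⬝ᵥ (((d : ℂ) • (1 : Matrix (Fin 2) (Fin 2) ℂ) + (I * s) • symp) *ᵥ ![1, ε * I])
      = ((2 * (d - ε * s) : ℝ) : ℂ) := by
  have hε' : (ε : ℂ) ^ 2 = 1 := by exact_mod_cast hε
  simp [symp, dotProduct, mulVec, Fin.sum_univ_two]
  linear_combination (-(d : ℂ) * ε ^ 2 + 2 * s * ε) * I_sq + d * hε'

lemma smul_one_add_smul_symp_eq_sum_vecMulVec (d s : ℝ) :
    (d : ℂ) • (1 : Matrix (Fin 2) (Fin 2) ℂ) + (I * s) • symp =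
      ((d + s) / 2) • vecMulVec ![1, -I] (star ![1, -I]) +
        ((d - s) / 2) • vecMulVec ![1, I] (star ![1, I]) := by
  ext i j
  fin_cases i <;> fin_cases j <;> simp [symp, vecMulVec] <;> ring

lemma posSemidef_smul_one_add_smul_symp_iff (d s : ℝ) :
    ((d : ℂ) • (1 : Matrix (Fin 2) (Fin 2) ℂ) + (I * s) • symp).PosSemidef ↔ |s| ≤ d := by
  rw [abs_le]
  constructor
  · intro h
    have hplus := h.dotProduct_mulVec_nonneg ![1, ((1 : ℝ) : ℂ) * I]
    have hminus := h.dotProduct_mulVec_nonneg ![1, ((-1 : ℝ) : ℂ) * I]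
    rw [star_dotProduct_smul_one_add_smul_symp_mulVec _ _ _ (by norm_num),
      Complex.zero_le_real] at hplus hminus
    constructor <;> linarith
  · rintro ⟨hlow, hupp⟩
    rw [smul_one_add_smul_symp_eq_sum_vecMulVec]
    exact ((posSemidef_vecMulVec_self_star _).smul (by linarith)).add
      ((posSemidef_vecMulVec_self_star _).smul (by linarith))

lemma Gam_inv (ν r : ℝ) (hν : ν ≠ 0) :
    (Gam ν r)⁻¹ = diagonal ![(((ν * Real.exp (2 * r))⁻¹ : ℝ) : ℂ),
      (((ν * Real.exp (-(2 * r)))⁻¹ : ℝ) : ℂ)] := by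
  rw [Gam, inv_diagonal_of_ne_zero fun i => by fin_cases i <;> simp [hν]]
  congr 1
  ext i
  fin_cases i <;> simp

lemma Kbayes_eq_diagonal (ν r γ : ℝ) (hν : ν ≠ 0) :
    Kbayes ν r γ = diagonal ![((-γ + 2 * γ * (ν * Real.exp (2 * r))⁻¹ : ℝ) : ℂ),
      ((-γ + 2 * γ * (ν * Real.exp (-(2 * r)))⁻¹ : ℝ) : ℂ)] := by
  rw [Kbayes, Gam_inv ν r hν, smul_one_eq_diagonal, ← diagonal_smul, diagonal_add]
  congr 1
  ext i
  fin_cases i <;> simp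

lemma bayes_drift_trace (ν r γ : ℝ) (hν : ν ≠ 0) :
    (-γ + 2 * γ * (ν * Real.exp (2 * r))⁻¹) + (-γ + 2 * γ * (ν * Real.exp (-(2 * r)))⁻¹)
      = 2 * γ * (2 * Real.cosh (2 * r) / ν - 1) := by
  rw [Real.cosh_eq, Real.exp_neg]
  field_simp
  ring

lemma MBayes_eq (ν r γ : ℝ) (hν : ν ≠ 0) :
    MBayes ν r γ = ((2 * γ : ℝ) : ℂ) • (1 : Matrix (Fin 2) (Fin 2) ℂ) +
      (I * ((2 * γ * (2 * Real.cosh (2 * r) / ν - 1) : ℝ) : ℂ)) • symp := by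
  rw [MBayes, Kbayes_eq_diagonal ν r γ hν, diagonal_mul_symp_add_symp_mul_transpose, smul_smul,
    ← bayes_drift_trace ν r γ hν]
  simp

theorem bayes_generator_posSemidef_iff_general (ν r γ : ℝ) (hγ : 0 < γ) (hν : 1 ≤ ν) :
    (MBayes ν r γ).PosSemidef ↔ Real.cosh (2 * r) ≤ ν := by
  have hν₀ : 0 < ν := by linarith
  rw [MBayes_eq ν r γ hν₀.ne', posSemidef_smul_one_add_smul_symp_iff, abs_mul,
    abs_of_pos (by positivity : 0 < 2 * γ), mul_le_iff_le_one_right (by positivity), abs_sub_le_iff,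
    sub_le_iff_le_add, one_add_one_eq_two, div_le_iff₀ hν₀]
  have hratio : 0 ≤ 2 * Real.cosh (2 * r) / ν := by positivity
  constructor
  · rintro ⟨h, -⟩
    linarith
  · intro h
    constructor <;> linarith

/-- No-go theorem: the fixed-diffusion Bayes reverse generator is completely positive
(equivalently `M^Bayes ⪰ 0`) iff `cosh(2r) ≤ ν`. -/
theorem bayes_generator_posSemidef_iff (ν r γ : ℝ) (hγ : 0 < γ) (hν : 1 ≤ ν) (hr : 0 ≤ r) :
    (MBayes ν r γ).PosSemidef ↔ Real.cosh (2 * r) ≤ ν :=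
  bayes_generator_posSemidef_iff_general ν r γ hγ hν
end

section
/- Let n be a natural number, let σ be a real 2n×2n antisymmetric matrix, and let K, D be real 2n×2n matrices with D symmetric. Suppose there exists ε > 0 such that for all t ∈ (0, ε) the complex matrix t·D + i·((I + t·K)·σ·(I + t·K)ᵀ − σ) is positive semidefinite. Then M := D + i·(K·σ + σ·Kᵀ) is positive semidefinite. -/
/-!
Expanding `(1 + tK) σ (1 + tK)ᵀ - σ`, the HHW matrix of the step of duration `t` is
`t • M + t² • B` with `B = i K σ Kᵀ`. Dividing by `t > 0` preserves positive semidefiniteness,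
so `M + t • B` is positive semidefinite for small `t > 0`; it tends to `M` as `t → 0⁺`, and the
positive semidefinite matrices form a closed set.
-/

open Matrix Complex Filter Topology
open scoped ComplexOrder

namespace Matrix

theorem one_add_smul_mul_mul_transpose_sub {n R : Type*} [Fintype n] [DecidableEq n]
    [CommRing R] (K S : Matrix n n R) (t : R) :
    (1 + t • K) * S * (1 + t • K)ᵀ - S = t • (K * S + S * Kᵀ) + t ^ 2 • (K * S * Kᵀ) := by
  simp only [transpose_add, transpose_smul, transpose_one, Matrix.add_mul, Matrix.mul_add,
    Matrix.one_mul, Matrix.mul_one, Matrix.smul_mul, Matrix.mul_smul, smul_add, smul_smul]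
  module

variable {n 𝕜 : Type*} [Fintype n] [RCLike 𝕜]

theorem isClosed_setOf_posSemidef : IsClosed {A : Matrix n n 𝕜 | A.PosSemidef} := by
  simp only [posSemidef_iff_dotProduct_mulVec, Set.ofPred_and, Set.ofPred_forall]
  exact (isClosed_eq (by fun_prop) continuous_id).inter
    (isClosed_iInter fun x => isClosed_le continuous_const (by fun_prop))

theorem PosSemidef.of_eventually_smul_add_sq_smul {A B : Matrix n n 𝕜}
    (h : ∀ᶠ t : ℝ in 𝓝[>] 0, (t • A + t ^ 2 • B).PosSemidef) : A.PosSemidef := by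
  have hlim : Tendsto (fun t : ℝ => A + t • B) (𝓝[>] 0) (𝓝 A) := by
    have : Tendsto (fun t : ℝ => A + t • B) (𝓝 0) (𝓝 (A + (0 : ℝ) • B)) :=
      (by fun_prop : Continuous fun t : ℝ => A + t • B).tendsto 0
    simpa using this.mono_left nhdsWithin_le_nhds
  refine isClosed_setOf_posSemidef.mem_of_tendsto hlim ?_
  filter_upwards [h, self_mem_nhdsWithin] with t ht (htpos : 0 < t)
  convert ht.smul (inv_nonneg.mpr htpos.le) using 1
  match_scalars <;> field_simp

end Matrix

theorem generator_cp_of_infinitesimal_cp_general (n : ℕ)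
    (σ K D : Matrix (Fin (2 * n)) (Fin (2 * n)) ℝ)
    (h : ∃ ε > (0 : ℝ), ∀ t : ℝ, 0 < t → t < ε →
      ((t : ℂ) • D.map Complex.ofReal +
        Complex.I • (((1 : Matrix (Fin (2 * n)) (Fin (2 * n)) ℂ)
              + (t : ℂ) • K.map Complex.ofReal)
            * σ.map Complex.ofReal
            * ((1 : Matrix (Fin (2 * n)) (Fin (2 * n)) ℂ)
              + (t : ℂ) • K.map Complex.ofReal)ᵀ
          - σ.map Complex.ofReal)).PosSemidef) :
    (D.map Complex.ofReal +
      Complex.I • (K.map Complex.ofReal * σ.map Complex.ofReal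
        + σ.map Complex.ofReal * (K.map Complex.ofReal)ᵀ)).PosSemidef := by
  obtain ⟨ε, hε, h⟩ := h
  set Kc := K.map Complex.ofReal
  set σc := σ.map Complex.ofReal
  set Dc := D.map Complex.ofReal
  have expand (t : ℝ) : (t : ℂ) • Dc + I • ((1 + (t : ℂ) • Kc) * σc * (1 + (t : ℂ) • Kc)ᵀ - σc)
      = t • (Dc + I • (Kc * σc + σc * Kcᵀ)) + t ^ 2 • (I • (Kc * σc * Kcᵀ)) := by
    rw [one_add_smul_mul_mul_transpose_sub, Complex.coe_smul, Complex.coe_smul]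
    module
  refine PosSemidef.of_eventually_smul_add_sq_smul (B := I • (Kc * σc * Kcᵀ)) ?_
  filter_upwards [Ioo_mem_nhdsGT hε] with t ⟨ht0, htε⟩
  rw [← expand]
  exact h t ht0 htε

/-- Necessity of the generator CP condition: if the HHW CP matrix of the infinitesimal
Gaussian step `X = I + tK`, `Y = tD` is positive semidefinite for all sufficiently small
`t > 0`, then the generator CP matrix `M = D + i(Kσ + σKᵀ)` is positive semidefinite. -/
theorem generator_cp_of_infinitesimal_cp (n : ℕ)
    (σ K D : Matrix (Fin (2 * n)) (Fin (2 * n)) ℝ)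
    (hσ : σᵀ = -σ) (hD : Dᵀ = D)
    (h : ∃ ε > (0 : ℝ), ∀ t : ℝ, 0 < t → t < ε →
      ((t : ℂ) • D.map Complex.ofReal +
        Complex.I • (((1 : Matrix (Fin (2 * n)) (Fin (2 * n)) ℂ)
              + (t : ℂ) • K.map Complex.ofReal)
            * σ.map Complex.ofReal
            * ((1 : Matrix (Fin (2 * n)) (Fin (2 * n)) ℂ)
              + (t : ℂ) • K.map Complex.ofReal)ᵀ
          - σ.map Complex.ofReal)).PosSemidef) :
    (D.map Complex.ofReal +
      Complex.I • (K.map Complex.ofReal * σ.map Complex.ofReal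
        + σ.map Complex.ofReal * (K.map Complex.ofReal)ᵀ)).PosSemidef :=
  generator_cp_of_infinitesimal_cp_general n σ K D h
end

section
/- Let μ > 1 be real, σ := !![0, 1; -1, 0], Z := diag(1, −1), and let X, Y be real 2×2 matrices with Y symmetric. Set C(μ) := √(μ² − 1)·X·Z, B(μ) := μ·I. Then Z·σ·Z = −σ, and over ℂ the Schur complement S(μ) := (μ·X·Xᵀ + Y + i·σ) − C(μ)·(B(μ) + i·σ)⁻¹·C(μ)ᵀ satisfies S(μ) = Y + i·(σ − X·σ·Xᵀ); in particular S(μ) is independent of μ. -/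
/-!
Since `σ² = −1`, the matrix `μ + iσ` has inverse `(μ² − 1)⁻¹ (μ − iσ)`, and the factor
`√(μ² − 1)²` coming from the two copies of `C(μ)` cancels the scalar `(μ² − 1)⁻¹`.
What is left is `X Z (μ − iσ) Z Xᵀ`, and `Z² = 1`, `Z σ Z = −σ` turn this into
`X (μ + iσ) Xᵀ = μ X Xᵀ + i X σ Xᵀ`, whose `μ`-dependent part cancels against `μ X Xᵀ`.
-/

open Matrix Complex

/-- `Z = diag(1, −1)` as a complex matrix. -/
noncomputable def Zmat : Matrix (Fin 2) (Fin 2) ℂ := !![1, 0; 0, -1]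

lemma symp_mul_symp : symp * symp = -1 := by
  ext i j; fin_cases i <;> fin_cases j <;> simp [symp]

lemma Zmat_transpose : Zmatᵀ = Zmat := by
  ext i j; fin_cases i <;> fin_cases j <;> simp [Zmat]

lemma Zmat_mul_Zmat : Zmat * Zmat = 1 := by
  ext i j; fin_cases i <;> fin_cases j <;> simp [Zmat]

lemma Zmat_mul_symp_mul_Zmat : Zmat * symp * Zmat = -symp := by
  ext i j; fin_cases i <;> fin_cases j <;> simp [symp, Zmat]

lemma smul_one_add_I_smul_symp_mul_sub (μ : ℂ) :
    (μ • 1 + I • symp) * (μ • 1 - I • symp) = (μ ^ 2 - 1) • (1 : Matrix (Fin 2) (Fin 2) ℂ) := by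
  simp only [add_mul, mul_sub, smul_mul_smul, one_mul, mul_one, symp_mul_symp, mul_comm μ I,
    I_mul_I, smul_neg, sub_smul, neg_smul, one_smul, sq]
  abel

lemma inv_smul_one_add_I_smul_symp (μ : ℂ) (hμ : μ ^ 2 - 1 ≠ 0) :
    (μ • 1 + I • symp)⁻¹ = (μ ^ 2 - 1)⁻¹ • (μ • 1 - I • symp) := by
  refine inv_eq_right_inv ?_
  rw [mul_smul_comm, smul_one_add_I_smul_symp_mul_sub, smul_smul, inv_mul_cancel₀ hμ, one_smul]

lemma Zmat_mul_smul_one_sub_I_smul_symp_mul_Zmat (μ : ℂ) :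
    Zmat * (μ • 1 - I • symp) * Zmat = μ • 1 + I • symp := by
  rw [mul_sub, sub_mul, mul_smul_comm, smul_mul_assoc, mul_one, Zmat_mul_Zmat, mul_smul_comm,
    smul_mul_assoc, Zmat_mul_symp_mul_Zmat, smul_neg, sub_neg_eq_add]

lemma smul_mul_inv_sq_smul_mul_transpose {K m n : Type*} [Field K] [Fintype n] [Fintype m]
    {t : K} (ht : t ≠ 0) (A : Matrix m n K) (M : Matrix n n K) :
    t • A * ((t ^ 2)⁻¹ • M) * (t • A)ᵀ = A * M * Aᵀ := by
  simp only [transpose_smul, Matrix.smul_mul, Matrix.mul_smul, smul_smul]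
  rw [show t * ((t ^ 2)⁻¹ * t) = 1 by field_simp, one_smul]

theorem tmsv_schur_complement_general (μ : ℝ) (hμ : 1 < μ)
    (X Y : Matrix (Fin 2) (Fin 2) ℝ) :
    Zmat * symp * Zmat = -symp ∧
    ((μ : ℂ) • (X.map Complex.ofReal * (X.map Complex.ofReal)ᵀ)
        + Y.map Complex.ofReal + Complex.I • symp)
      - ((Real.sqrt (μ ^ 2 - 1) : ℂ) • (X.map Complex.ofReal * Zmat))
        * ((μ : ℂ) • (1 : Matrix (Fin 2) (Fin 2) ℂ) + Complex.I • symp)⁻¹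
        * ((Real.sqrt (μ ^ 2 - 1) : ℂ) • (X.map Complex.ofReal * Zmat))ᵀ
      = Y.map Complex.ofReal
        + Complex.I • (symp - X.map Complex.ofReal * symp * (X.map Complex.ofReal)ᵀ) := by
  refine ⟨Zmat_mul_symp_mul_Zmat, ?_⟩
  have hpos : 0 < μ ^ 2 - 1 := by nlinarith
  have hsq : (Real.sqrt (μ ^ 2 - 1) : ℂ) ^ 2 = (μ : ℂ) ^ 2 - 1 := by
    rw [← ofReal_pow, Real.sq_sqrt hpos.le]; push_cast; ring
  have hsqrt : (Real.sqrt (μ ^ 2 - 1) : ℂ) ≠ 0 := ofReal_ne_zero.mpr (Real.sqrt_pos.mpr hpos).ne'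
  set A := X.map Complex.ofReal
  rw [inv_smul_one_add_I_smul_symp _ (hsq ▸ pow_ne_zero 2 hsqrt), ← hsq,
    smul_mul_inv_sq_smul_mul_transpose hsqrt, transpose_mul, Zmat_transpose,
    show ∀ N, A * Zmat * N * (Zmat * Aᵀ) = A * (Zmat * N * Zmat) * Aᵀ by
      simp only [mul_assoc, forall_const],
    Zmat_mul_smul_one_sub_I_smul_symp_mul_Zmat]
  simp only [mul_add, add_mul, mul_smul_comm, smul_mul_assoc, mul_one, smul_sub]
  abel

/-- The Schur complement of the TMSV physicality matrix is μ-independent: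
`Z σ Z = −σ`, and
`S(μ) = (μ X Xᵀ + Y + iσ) − C(μ)(μI + iσ)⁻¹ C(μ)ᵀ = Y + i(σ − X σ Xᵀ)`,
where `C(μ) = √(μ² − 1) X Z`. -/
theorem tmsv_schur_complement (μ : ℝ) (hμ : 1 < μ)
    (X Y : Matrix (Fin 2) (Fin 2) ℝ) (hY : Yᵀ = Y) :
    Zmat * symp * Zmat = -symp ∧
    ((μ : ℂ) • (X.map Complex.ofReal * (X.map Complex.ofReal)ᵀ)
        + Y.map Complex.ofReal + Complex.I • symp)
      - ((Real.sqrt (μ ^ 2 - 1) : ℂ) • (X.map Complex.ofReal * Zmat))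
        * ((μ : ℂ) • (1 : Matrix (Fin 2) (Fin 2) ℂ) + Complex.I • symp)⁻¹
        * ((Real.sqrt (μ ^ 2 - 1) : ℂ) • (X.map Complex.ofReal * Zmat))ᵀ
      = Y.map Complex.ofReal
        + Complex.I • (symp - X.map Complex.ofReal * symp * (X.map Complex.ofReal)ᵀ) :=
  tmsv_schur_complement_general μ hμ X Y
end
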